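/- A finite mixture model with components from a family of probability distributions is identifiable (the mixing weights and component parameters are determined up to permutation) if and only if every finite subset of distinct component distributions from the family is linearly independent as functions. -/
import Mathlib


/-- Yakowitz–Spragins criterion: a family `f` of (distinct) probability mass functions
generates identifiable finite mixtures — any two finite mixtures that agree as
functions have identical mixing weights — if and only if the family is linearly
independent. -/
theorem stmt_13 {Ω ι : Type*} (f : ι → Ω → ℝ)
    (hpos : ∀ i x, 0 ≤ f i x) (hprob : ∀ i, HasSum (f i) 1)
    (hinj : Function.Injective f) :
    (∀ w₁ w₂ : ι →₀ ℝ,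
        (∀ i, 0 ≤ w₁ i) → (∀ i, 0 ≤ w₂ i) →
        (w₁.sum fun _ c => c) = 1 → (w₂.sum fun _ c => c) = 1 →
        (∀ x, (w₁.sum fun i c => c * f i x) = (w₂.sum fun i c => c * f i x)) →
        w₁ = w₂) ↔
      LinearIndependent ℝ f := by
  constructor
  · intro hid
    rw [linearIndependent_iff]
    intro c hc
    -- pointwise: the linear combination vanishes at every point
    have hpt : ∀ x, (c.sum fun i a => a * f i x) = 0 := by
      intro x
      have h0 := congrFun (by rwa [Finsupp.linearCombination_apply] at hc :
        (c.sum fun i a => a • f i) = 0) x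
      rw [Finsupp.sum]
      simpa [Finsupp.sum, Finset.sum_apply] using h0
    -- positive and negative parts
    set p : ι →₀ ℝ := c.mapRange (fun a => max a 0) (by simp) with hp
    set n : ι →₀ ℝ := c.mapRange (fun a => max (-a) 0) (by simp) with hn
    have hpn : ∀ i, p i - n i = c i := by
      intro i
      simp [hp, hn, Finsupp.mapRange_apply, max_zero_sub_max_neg_zero_eq_self]
    have hpnn : ∀ i, 0 ≤ p i := fun i => by
      simp [hp, Finsupp.mapRange_apply, le_max_right]
    have hnnn : ∀ i, 0 ≤ n i := fun i => by
      simp [hn, Finsupp.mapRange_apply, le_max_right]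
    have hps : p.support ⊆ c.support := Finsupp.support_mapRange
    have hns : n.support ⊆ c.support := Finsupp.support_mapRange
    -- rewrite finsupp sums as sums over c.support
    have hsum : ∀ (w : ι →₀ ℝ), w.support ⊆ c.support → ∀ (F : ι → ℝ → ℝ),
        (∀ i, F i 0 = 0) → w.sum F = ∑ i ∈ c.support, F i (w i) :=
      fun w hw F hF => Finsupp.sum_of_support_subset w hw F (fun i _ => hF i)
    -- the two mixtures agree pointwise
    have hmix : ∀ x, (p.sum fun i a => a * f i x) = (n.sum fun i a => a * f i x) := by
      intro x
      rw [hsum p hps _ (fun i => by ring), hsum n hns _ (fun i => by ring)]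
      have : ∑ i ∈ c.support, (p i * f i x - n i * f i x) = 0 := by
        have := hpt x
        rw [Finsupp.sum] at this
        calc ∑ i ∈ c.support, (p i * f i x - n i * f i x)
            = ∑ i ∈ c.support, c i * f i x := by
              refine Finset.sum_congr rfl fun i _ => ?_
              rw [← hpn i]; ring
          _ = 0 := this
      rw [Finset.sum_sub_distrib] at this
      linarith
    -- total masses
    have hHp : HasSum (fun x => ∑ i ∈ c.support, p i * f i x)
        (∑ i ∈ c.support, p i) := by
      refine hasSum_sum fun i _ => ?_
      simpa using (hprob i).mul_left (p i)
    have hHn : HasSum (fun x => ∑ i ∈ c.support, n i * f i x)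
        (∑ i ∈ c.support, n i) := by
      refine hasSum_sum fun i _ => ?_
      simpa using (hprob i).mul_left (n i)
    have hS : ∑ i ∈ c.support, p i = ∑ i ∈ c.support, n i := by
      refine hHp.unique ?_
      convert hHn using 2 with x
      have := hmix x
      rwa [hsum p hps _ (fun i => by ring), hsum n hns _ (fun i => by ring)] at this
    set S : ℝ := ∑ i ∈ c.support, p i with hSdef
    by_cases hS0 : S = 0
    · -- all parts vanish
      have hp0 : ∀ i ∈ c.support, p i = 0 :=
        (Finset.sum_eq_zero_iff_of_nonneg (fun i _ => hpnn i)).1 hS0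
      have hn0 : ∀ i ∈ c.support, n i = 0 :=
        (Finset.sum_eq_zero_iff_of_nonneg (fun i _ => hnnn i)).1 (hS.symm.trans hS0)
      ext i
      by_cases hi : i ∈ c.support
      · rw [← hpn i, hp0 i hi, hn0 i hi]; simp
      · simpa using Finsupp.notMem_support_iff.1 hi
    · have hSpos : 0 < S := lt_of_le_of_ne (Finset.sum_nonneg fun i _ => hpnn i) (Ne.symm hS0)
      set w₁ : ι →₀ ℝ := S⁻¹ • p with hw₁
      set w₂ : ι →₀ ℝ := S⁻¹ • n with hw₂
      have hw₁s : w₁.support ⊆ c.support := (Finsupp.support_smul).trans hps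
      have hw₂s : w₂.support ⊆ c.support := (Finsupp.support_smul).trans hns
      have key := hid w₁ w₂
        (fun i => by
          simp only [hw₁, Finsupp.smul_apply, smul_eq_mul]
          exact mul_nonneg (inv_nonneg.2 hSpos.le) (hpnn i))
        (fun i => by
          simp only [hw₂, Finsupp.smul_apply, smul_eq_mul]
          exact mul_nonneg (inv_nonneg.2 hSpos.le) (hnnn i))
        (by
          rw [hsum w₁ hw₁s _ (fun i => rfl)]
          simp only [hw₁, Finsupp.smul_apply, smul_eq_mul]
          rw [← Finset.mul_sum]
          exact inv_mul_cancel₀ hS0)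
        (by
          rw [hsum w₂ hw₂s _ (fun i => rfl)]
          simp only [hw₂, Finsupp.smul_apply, smul_eq_mul]
          rw [← Finset.mul_sum, ← hS]
          exact inv_mul_cancel₀ hS0)
        (by
          intro x
          rw [hsum w₁ hw₁s _ (fun i => by ring), hsum w₂ hw₂s _ (fun i => by ring)]
          simp only [hw₁, hw₂, Finsupp.smul_apply, smul_eq_mul, mul_assoc]
          rw [← Finset.mul_sum, ← Finset.mul_sum]
          have := hmix x
          rw [hsum p hps _ (fun i => by ring), hsum n hns _ (fun i => by ring)] at this
          rw [this])
      -- conclude p = n, hence c = 0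
      have hpn' : p = n := by
        have := congrArg (fun w : ι →₀ ℝ => S • w) key
        simpa [hw₁, hw₂, smul_smul, mul_inv_cancel₀ hS0] using this
      ext i
      rw [← hpn i, hpn']
      simp
  · intro hli w₁ w₂ _ _ _ _ hx
    have := linearIndependent_iff.1 hli (w₁ - w₂)
    have hz : Finsupp.linearCombination ℝ f (w₁ - w₂) = 0 := by
      rw [map_sub, sub_eq_zero]
      ext x
      simp only [Finsupp.linearCombination_apply, Finsupp.sum, Finset.sum_apply,
        Pi.smul_apply, smul_eq_mul]
      have := hx x
      rw [Finsupp.sum, Finsupp.sum] at this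
      exact this
    have := this hz
    exact sub_eq_zero.1 this
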